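/- arXiv:2503.14313 — 2 statements merged into one kernel-verified Lean document; each statement's English description precedes it below -/
import Mathlib

section
/- Let a_n > 0 with a_n → a ∈ [0, ∞) as n → ∞, and fix an integer r ≥ 0. For the dynamic geometric distribution with parameter a_n, the quantity s²_{r,n} satisfies: 2·max{0, a(r+1) − (r+1)^{r+1}e^{−(r+1)} − (r+2)^{r+2}e^{−(r+2)}} ≤ liminf_{n→∞} s²_{r,n} ≤ limsup_{n→∞} s²_{r,n} ≤ 2a(r+1) + 2(r+1)^{r+1}e^{−(r+1)} + 2(r+2)^{r+2}e^{−(r+2)}. -/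
open MeasureTheory ProbabilityTheory Filter Topology
open scoped NNReal

noncomputable section

/-- pmf of the dynamic geometric distribution with parameter `a`:
`p_ℓ = (e^{1/a} - 1) e^{-ℓ/a}` for `ℓ = 1, 2, …` (letter `0` is not used). -/
def geomPMF (a : ℝ) (ℓ : ℕ) : ℝ :=
  if ℓ = 0 then 0 else (Real.exp (1 / a) - 1) * Real.exp (-(ℓ : ℝ) / a)

/-- pmf of the fixed geometric distribution: `p_ℓ = p (1-p)^{ℓ-1}` for `ℓ = 1, 2, …`. -/
def fixedGeomPMF (p : ℝ) (ℓ : ℕ) : ℝ :=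
  if ℓ = 0 then 0 else p * (1 - p) ^ (ℓ - 1)

/-- pmf of the dynamic discrete uniform distribution with parameter `γ` and sample size `n`:
`p_ℓ^{(n)} = 1/⌊n^γ⌋` for `ℓ = 1, …, ⌊n^γ⌋`. -/
def unifPMF (γ : ℝ) (n : ℕ) (ℓ : ℕ) : ℝ :=
  if 1 ≤ ℓ ∧ ℓ ≤ ⌊(n : ℝ) ^ γ⌋₊ then (⌊(n : ℝ) ^ γ⌋₊ : ℝ)⁻¹ else 0

/-- pmf of the fixed discrete uniform distribution on `{1, …, K}`. -/
def fixedUnifPMF (K : ℕ) (ℓ : ℕ) : ℝ :=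
  if 1 ≤ ℓ ∧ ℓ ≤ K then (K : ℝ)⁻¹ else 0

/-- `y_{ℓ,n}`: the number of times letter `ℓ` appears in the sample `ω`. -/
def occ {n : ℕ} (ω : Fin n → ℕ) (ℓ : ℕ) : ℕ :=
  (Finset.univ.filter fun i => ω i = ℓ).card

/-- `N_{r,n}`: the number of letters appearing exactly `r` times in `ω` (valid for `r ≥ 1`). -/
def Ncount {n : ℕ} (ω : Fin n → ℕ) (r : ℕ) : ℕ :=
  ((Finset.univ.image ω).filter fun ℓ => occ ω ℓ = r).card

/-- `π_{r,n}`: the `r`-th occupancy probability. -/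
def occProb {n : ℕ} (p : ℕ → ℝ) (ω : Fin n → ℕ) (r : ℕ) : ℝ :=
  ∑' ℓ : ℕ, p ℓ * (if occ ω ℓ = r then 1 else 0)

/-- `T_{r,n}`: Turing's estimator. -/
def turing {n : ℕ} (ω : Fin n → ℕ) (r : ℕ) : ℝ :=
  ((r : ℝ) + 1) * (Ncount ω (r + 1) : ℝ) / (n : ℝ)

/-- `ŝ_{r,n} = sqrt((r+1)² N_{r+1,n} + (r+2)(r+1) N_{r+2,n})`. -/
def shat {n : ℕ} (ω : Fin n → ℕ) (r : ℕ) : ℝ :=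
  Real.sqrt (((r : ℝ) + 1) ^ 2 * (Ncount ω (r + 1) : ℝ) +
    ((r : ℝ) + 2) * ((r : ℝ) + 1) * (Ncount ω (r + 2) : ℝ))

/-- the joint pmf of an i.i.d. sample of size `n` from the pmf `p`. -/
def jointPMF {n : ℕ} (p : ℕ → ℝ) (ω : Fin n → ℕ) : ℝ := ∏ i, p (ω i)

/-- the normalized statistic `(n/ŝ_{r,n})(T_{r,n} - π_{r,n})`, interpreted as `0`
when `ŝ_{r,n} = 0` (which is automatic from Lean's convention `x / 0 = 0`). -/
def normStat {n : ℕ} (p : ℕ → ℝ) (ω : Fin n → ℕ) (r : ℕ) : ℝ :=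
  (n : ℝ) / shat ω r * (turing ω r - occProb p ω r)

open scoped Classical in
/-- the statistic `T_{r,n} (n/ŝ_{r,n}) (T_{r,n}/π_{r,n} - 1)`, interpreted as `0` on the
event where `ŝ_{r,n} = 0` or `π_{r,n} = 0`. -/
def ratioStat {n : ℕ} (p : ℕ → ℝ) (ω : Fin n → ℕ) (r : ℕ) : ℝ :=
  if shat ω r = 0 ∨ occProb p ω r = 0 then 0
  else turing ω r * ((n : ℝ) / shat ω r) * (turing ω r / occProb p ω r - 1)

/-- `s²_{r,n} = Σ_ℓ (r+1+n p_ℓ) e^{-n p_ℓ} (n p_ℓ)^{r+1} / r!`. -/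
def s2 (p : ℕ → ℝ) (r n : ℕ) : ℝ :=
  ∑' ℓ : ℕ, ((r : ℝ) + 1 + (n : ℝ) * p ℓ) * Real.exp (-((n : ℝ) * p ℓ)) *
    ((n : ℝ) * p ℓ) ^ (r + 1) / (r.factorial : ℝ)

/-- `h_{n,η}(x) = e^{-n f_n(x)} (n f_n(x))^η` where `f_n(x) = (e^{1/a_n} - 1) e^{-x/a_n}`. -/
def hfun (a : ℝ) (n : ℕ) (η : ℝ) (x : ℝ) : ℝ :=
  Real.exp (-((n : ℝ) * ((Real.exp (1 / a) - 1) * Real.exp (-x / a)))) *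
    ((n : ℝ) * ((Real.exp (1 / a) - 1) * Real.exp (-x / a))) ^ η

/-!
With `C = n (e^{1/a} - 1)` one has `n p_ℓ = C e^{-ℓ/a}`, so
`s²_{r,n} = Σ_{ℓ ≥ 1} ((r + 1) h_{r+1}(ℓ) + h_{r+2}(ℓ)) / r!` with `h_j(x) = φ_j(C e^{-x/a})` and
`φ_j(t) = e^{-t} t^j`. As `φ_j` increases up to `t = j` and decreases afterwards, `h_j` is unimodal
with maximum `M_j = j^j e^{-j}`, so its sum over `ℓ ≥ 1` is within `M_j` of its integral over
`(0, ∞)`. The substitution `t = C e^{-x/a}` turns this integral into `a ∫_0^C e^{-t} t^{j-1} dt`,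
which tends to `a (j - 1)!` because `C → ∞` while `a_n` stays bounded. Hence `s²_{r,n} ≥ 0` lies
within `((r + 1) M_{r+1} + M_{r+2}) / r! ≤ 2 M_{r+1} + 2 M_{r+2}` of a sequence tending to `2 a (r + 1)`.
-/

open Set
open scoped Nat

section Unimodal

variable {H : ℝ → ℝ} {c : ℝ}

lemma le_of_monotoneOn_Iic_of_antitoneOn_Ici (hmono : MonotoneOn H (Iic c))
    (hanti : AntitoneOn H (Ici c)) (x : ℝ) : H x ≤ H c := by
  rcases le_total x c with h | h
  · exact hmono h (mem_Iic.2 le_rfl) h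
  · exact hanti (mem_Ici.2 le_rfl) h h

lemma monotoneOn_Icc_zero_floor (hmono : MonotoneOn H (Iic c)) :
    MonotoneOn H (Icc 0 (⌊c⌋₊ : ℝ)) := by
  rcases Nat.eq_zero_or_pos ⌊c⌋₊ with h | h
  · simp [h]
  · exact hmono.mono fun x hx => hx.2.trans (Nat.floor_le (by linarith [Nat.floor_pos.1 h]))

lemma antitoneOn_Ici_floor_add_one (hanti : AntitoneOn H (Ici c)) {s : Set ℝ}
    (hs : s ⊆ Ici ((⌊c⌋₊ : ℝ) + 1)) : AntitoneOn H s :=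
  hanti.mono fun _ hx => (Nat.lt_floor_add_one c).le.trans (hs hx)

lemma add_le_add_integral_of_unimodal (hmono : MonotoneOn H (Iic c))
    (hanti : AntitoneOn H (Ici c)) (hcont : Continuous H) {m : ℝ} (hcm : c ≤ m + 1) :
    H m + H (m + 1) ≤ H c + ∫ x in m..m + 1, H x := by
  have hmin : min (H m) (H (m + 1)) ≤ ∫ x in m..m + 1, H x := by
    have hle : ∀ x ∈ Icc m (m + 1), min (H m) (H (m + 1)) ≤ H x := by
      rintro x ⟨hmx, hxm⟩
      rcases le_total x c with h | h
      · exact (min_le_left _ _).trans (hmono (hmx.trans h) h hmx)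
      · exact (min_le_right _ _).trans (hanti h hcm hxm)
    simpa using intervalIntegral.integral_mono_on (μ := volume) (by linarith)
      intervalIntegrable_const (hcont.intervalIntegrable _ _) hle
  have hmax : max (H m) (H (m + 1)) ≤ H c :=
    max_le (le_of_monotoneOn_Iic_of_antitoneOn_Ici hmono hanti _)
      (le_of_monotoneOn_Iic_of_antitoneOn_Ici hmono hanti _)
  linarith [min_add_max (H m) (H (m + 1))]

lemma sum_range_le_integral_add_of_unimodal (hmono : MonotoneOn H (Iic c))
    (hanti : AntitoneOn H (Ici c)) (h0 : ∀ x, 0 ≤ H x) (hcont : Continuous H) {N : ℕ}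
    (hN : ⌊c⌋₊ + 1 ≤ N) :
    ∑ i ∈ Finset.range N, H (i + 1) ≤ (∫ x in (0 : ℝ)..N, H x) + H c := by
  set m := ⌊c⌋₊
  have hii : ∀ u v : ℝ, IntervalIntegrable H volume u v := fun u v => hcont.intervalIntegrable u v
  have hleft : ∑ i ∈ Finset.Ico 0 m, H i ≤ ∫ x in (0 : ℝ)..m, H x := by
    simpa using MonotoneOn.sum_le_integral_Ico (Nat.zero_le m)
      (by simpa using monotoneOn_Icc_zero_floor hmono)
  have hpeak : H m + H (m + 1) ≤ H c + ∫ x in (m : ℝ)..m + 1, H x :=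
    add_le_add_integral_of_unimodal hmono hanti hcont (Nat.lt_floor_add_one c).le
  have hright : ∑ i ∈ Finset.Ico (m + 1) N, H ↑(i + 1) ≤ ∫ x in ((m + 1 : ℕ) : ℝ)..N, H x :=
    (antitoneOn_Ici_floor_add_one hanti fun x hx => by simpa using hx.1).sum_le_integral_Ico hN
  have hsplit : ∑ i ∈ Finset.range (N + 1), H i
      = ∑ i ∈ Finset.Ico 0 m, H i + (H m + H (m + 1)) + ∑ i ∈ Finset.Ico (m + 1) N, H ↑(i + 1) := by
    rw [Finset.range_eq_Ico, ← Finset.sum_Ico_consecutive _ (Nat.zero_le m) (by omega : m ≤ N + 1),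
      ← Finset.sum_Ico_consecutive _ (by omega : m ≤ m + 2) (by omega : m + 2 ≤ N + 1),
      Finset.sum_Ico_add' (fun i : ℕ => H i) (m + 1) N 1]
    simp [Finset.sum_Ico_succ_top, add_assoc]
  have hint : (∫ x in (0 : ℝ)..m, H x) + (∫ x in (m : ℝ)..m + 1, H x)
      + ∫ x in ((m + 1 : ℕ) : ℝ)..N, H x = ∫ x in (0 : ℝ)..N, H x := by
    rw [Nat.cast_succ, intervalIntegral.integral_add_adjacent_intervals (hii _ _) (hii _ _),
      intervalIntegral.integral_add_adjacent_intervals (hii _ _) (hii _ _)]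
  have hzero : ∑ i ∈ Finset.range N, H (i + 1) + H 0 = ∑ i ∈ Finset.range (N + 1), H i := by
    simpa using (Finset.sum_range_succ' (fun i : ℕ => H i) N).symm
  linarith [h0 0]

lemma integral_le_sum_range_add_of_unimodal (hmono : MonotoneOn H (Iic c))
    (hanti : AntitoneOn H (Ici c)) (h0 : ∀ x, 0 ≤ H x) (hcont : Continuous H) {N : ℕ}
    (hN : ⌊c⌋₊ + 1 ≤ N) :
    (∫ x in (0 : ℝ)..N, H x) ≤ ∑ i ∈ Finset.range N, H (i + 1) + H c := by
  set m := ⌊c⌋₊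
  have hii : ∀ u v : ℝ, IntervalIntegrable H volume u v := fun u v => hcont.intervalIntegrable u v
  have hleft : (∫ x in (0 : ℝ)..m, H x) ≤ ∑ i ∈ Finset.Ico 0 m, H ↑(i + 1) := by
    simpa using MonotoneOn.integral_le_sum_Ico (Nat.zero_le m)
      (by simpa using monotoneOn_Icc_zero_floor hmono)
  have hpeak : (∫ x in (m : ℝ)..m + 1, H x) ≤ H c := by
    simpa using intervalIntegral.integral_mono_on (a := m) (b := m + 1) (by linarith) (hii _ _)
      intervalIntegrable_const
      fun x _ => le_of_monotoneOn_Iic_of_antitoneOn_Ici hmono hanti x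
  have hright : (∫ x in ((m + 1 : ℕ) : ℝ)..N, H x) ≤ ∑ i ∈ Finset.Ico (m + 1) N, H i :=
    (antitoneOn_Ici_floor_add_one hanti fun x hx => by simpa using hx.1).integral_le_sum_Ico hN
  have hsplit : ∑ i ∈ Finset.range N, H ↑(i + 1)
      = ∑ i ∈ Finset.Ico 0 m, H ↑(i + 1) + ∑ i ∈ Finset.Ico (m + 1) N, H i + H N := by
    rw [Finset.range_eq_Ico, ← Finset.sum_Ico_consecutive _ (Nat.zero_le m) (by omega : m ≤ N),
      Finset.sum_Ico_add' (fun i : ℕ => H i) m N 1, Finset.sum_Ico_succ_top (by omega : m + 1 ≤ N)]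
    ring
  have hint : (∫ x in (0 : ℝ)..m, H x) + (∫ x in (m : ℝ)..m + 1, H x)
      + ∫ x in ((m + 1 : ℕ) : ℝ)..N, H x = ∫ x in (0 : ℝ)..N, H x := by
    rw [Nat.cast_succ, intervalIntegral.integral_add_adjacent_intervals (hii _ _) (hii _ _),
      intervalIntegral.integral_add_adjacent_intervals (hii _ _) (hii _ _)]
  push_cast at hsplit hleft ⊢
  linarith [h0 N]

lemma sum_range_le_setIntegral_add_of_unimodal (hmono : MonotoneOn H (Iic c))
    (hanti : AntitoneOn H (Ici c)) (h0 : ∀ x, 0 ≤ H x) (hcont : Continuous H)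
    (hint : IntegrableOn H (Ioi 0)) (N : ℕ) :
    ∑ i ∈ Finset.range N, H (i + 1) ≤ (∫ x in Ioi 0, H x) + H c := by
  set N' := max N (⌊c⌋₊ + 1)
  calc ∑ i ∈ Finset.range N, H (i + 1) ≤ ∑ i ∈ Finset.range N', H (i + 1) :=
        Finset.sum_le_sum_of_subset_of_nonneg (Finset.range_subset_range.2 (le_max_left _ _))
          fun i _ _ => h0 _
    _ ≤ (∫ x in (0 : ℝ)..N', H x) + H c :=
        sum_range_le_integral_add_of_unimodal hmono hanti h0 hcont (le_max_right _ _)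
    _ ≤ (∫ x in Ioi 0, H x) + H c := by
        rw [intervalIntegral.integral_of_le (Nat.cast_nonneg _)]
        exact add_le_add_left
          (setIntegral_mono_set hint (ae_of_all _ h0) Ioc_subset_Ioi_self.eventuallyLE) _

lemma summable_of_unimodal (hmono : MonotoneOn H (Iic c)) (hanti : AntitoneOn H (Ici c))
    (h0 : ∀ x, 0 ≤ H x) (hcont : Continuous H) (hint : IntegrableOn H (Ioi 0)) :
    Summable fun i : ℕ => H (i + 1) :=
  summable_of_sum_range_le (fun _ => h0 _)
    (sum_range_le_setIntegral_add_of_unimodal hmono hanti h0 hcont hint)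

lemma abs_tsum_sub_integral_le_of_unimodal (hmono : MonotoneOn H (Iic c))
    (hanti : AntitoneOn H (Ici c)) (h0 : ∀ x, 0 ≤ H x) (hcont : Continuous H)
    (hint : IntegrableOn H (Ioi 0)) :
    |∑' i : ℕ, H (i + 1) - ∫ x in Ioi 0, H x| ≤ H c := by
  have hsum := summable_of_unimodal hmono hanti h0 hcont hint
  have hupper : ∑' i : ℕ, H (i + 1) ≤ (∫ x in Ioi 0, H x) + H c :=
    Real.tsum_le_of_sum_range_le (fun _ => h0 _)
      (sum_range_le_setIntegral_add_of_unimodal hmono hanti h0 hcont hint)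
  have hlower : (∫ x in Ioi 0, H x) ≤ ∑' i : ℕ, H (i + 1) + H c := by
    refine le_of_tendsto (intervalIntegral_tendsto_integral_Ioi 0 hint
      tendsto_natCast_atTop_atTop) ?_
    filter_upwards [eventually_ge_atTop (⌊c⌋₊ + 1)] with N hN
    calc (∫ x in (0 : ℝ)..N, H x) ≤ ∑ i ∈ Finset.range N, H (i + 1) + H c :=
          integral_le_sum_range_add_of_unimodal hmono hanti h0 hcont hN
      _ ≤ ∑' i : ℕ, H (i + 1) + H c := by
          gcongr
          exact hsum.sum_le_tsum _ fun _ _ => h0 _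
  rw [abs_sub_le_iff]
  constructor <;> linarith

end Unimodal

lemma max_le_liminf_and_limsup_le_of_abs_sub_le {ι : Type*} {l : Filter ι} [l.NeBot]
    {f g : ι → ℝ} {B L K : ℝ} (hg : Tendsto g l (𝓝 L)) (hfg : ∀ᶠ i in l, |f i - g i| ≤ K)
    (hfB : ∀ᶠ i in l, B ≤ f i) :
    max B (L - K) ≤ liminf f l ∧ liminf f l ≤ limsup f l ∧ limsup f l ≤ L + K := by
  have hlow : ∀ᶠ i in l, g i - K ≤ f i := hfg.mono fun i h => by linarith [(abs_le.1 h).1]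
  have hup : ∀ᶠ i in l, f i ≤ g i + K := hfg.mono fun i h => by linarith [(abs_le.1 h).2]
  have hbddAbove : IsBoundedUnder (· ≤ ·) l f := (hg.add_const K).isBoundedUnder_le.mono_le hup
  have hbddBelow : IsBoundedUnder (· ≥ ·) l f := isBoundedUnder_of_eventually_ge hfB
  refine ⟨max_le (le_liminf_of_le hbddAbove.isCoboundedUnder_ge hfB) ?_,
    liminf_le_limsup hbddAbove hbddBelow, ?_⟩
  · rw [← (hg.sub_const K).liminf_eq]
    exact liminf_le_liminf hlow (hg.sub_const K).isBoundedUnder_ge hbddAbove.isCoboundedUnder_ge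
  · rw [← (hg.add_const K).limsup_eq]
    exact limsup_le_limsup hup hbddBelow.isCoboundedUnder_le (hg.add_const K).isBoundedUnder_le

lemma succ_le_two_mul_factorial (r : ℕ) : r + 1 ≤ 2 * r ! := by
  cases r with
  | zero => simp
  | succ r => nlinarith [Nat.self_le_factorial (r + 1), Nat.factorial_pos (r + 1)]

lemma add_div_factorial_le (r : ℕ) {x y : ℝ} (hx : 0 ≤ x) (hy : 0 ≤ y) :
    ((r + 1) * x + y) / r ! ≤ 2 * x + 2 * y := by
  have h : ((r : ℝ) + 1) ≤ 2 * r ! := by exact_mod_cast succ_le_two_mul_factorial r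
  have h' : (1 : ℝ) ≤ 2 * r ! := by linarith [(r.cast_nonneg : (0 : ℝ) ≤ r)]
  rw [div_le_iff₀ (by positivity)]
  nlinarith [mul_le_mul_of_nonneg_right h hx, mul_le_mul_of_nonneg_right h' hy]

def expPow (k : ℕ) (t : ℝ) : ℝ := Real.exp (-t) * t ^ k

section ExpPow

variable (k : ℕ)

lemma continuous_expPow : Continuous (expPow k) := by
  unfold expPow
  fun_prop

lemma expPow_nonneg {t : ℝ} (ht : 0 ≤ t) : 0 ≤ expPow k t := by
  unfold expPow
  positivity

lemma hasDerivAt_expPow_succ (t : ℝ) :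
    HasDerivAt (expPow (k + 1)) (expPow k t * (k + 1 - t)) t := by
  refine (((hasDerivAt_neg t).exp).mul (hasDerivAt_pow (k + 1) t)).congr_deriv ?_
  simp only [expPow, Nat.add_sub_cancel]
  push_cast
  ring

lemma monotoneOn_expPow_succ : MonotoneOn (expPow (k + 1)) (Icc 0 (k + 1)) := by
  refine monotoneOn_of_deriv_nonneg (convex_Icc _ _) (continuous_expPow _).continuousOn
    (fun t _ => (hasDerivAt_expPow_succ k t).differentiableAt.differentiableWithinAt) ?_
  intro t ht
  rw [interior_Icc] at ht
  rw [(hasDerivAt_expPow_succ k t).deriv]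
  exact mul_nonneg (expPow_nonneg k ht.1.le) (by linarith [ht.2])

lemma antitoneOn_expPow_succ : AntitoneOn (expPow (k + 1)) (Ici (k + 1)) := by
  refine antitoneOn_of_deriv_nonpos (convex_Ici _) (continuous_expPow _).continuousOn
    (fun t _ => (hasDerivAt_expPow_succ k t).differentiableAt.differentiableWithinAt) ?_
  intro t ht
  rw [interior_Ici, mem_Ioi] at ht
  rw [(hasDerivAt_expPow_succ k t).deriv]
  exact mul_nonpos_of_nonneg_of_nonpos (expPow_nonneg k (by linarith)) (by linarith)

lemma expPow_eq_gamma_integrand :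
    expPow k = fun t => Real.exp (-t) * t ^ ((k + 1 : ℝ) - 1) := by
  ext t
  rw [add_sub_cancel_right, Real.rpow_natCast, expPow]

lemma integrableOn_expPow_Ioi : IntegrableOn (expPow k) (Ioi 0) := by
  rw [expPow_eq_gamma_integrand]
  exact Real.GammaIntegral_convergent (by positivity)

lemma integral_expPow_Ioi : ∫ t in Ioi 0, expPow k t = k ! := by
  rw [expPow_eq_gamma_integrand, ← Real.Gamma_eq_integral (by positivity),
    Real.Gamma_nat_eq_factorial]

lemma tendsto_intervalIntegral_expPow :
    Tendsto (fun C => ∫ t in (0 : ℝ)..C, expPow k t) atTop (𝓝 k !) := by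
  rw [← integral_expPow_Ioi]
  exact intervalIntegral_tendsto_integral_Ioi 0 (integrableOn_expPow_Ioi k) tendsto_id

end ExpPow

def geomScale (a : ℝ) (n : ℕ) : ℝ := n * (Real.exp (1 / a) - 1)

/-- `geomProfile a (geomScale a n) k` is `hfun a n (k + 1)`, written with a natural exponent. -/
def geomProfile (a C : ℝ) (k : ℕ) (x : ℝ) : ℝ := expPow (k + 1) (C * Real.exp (-x / a))

section GeomProfile

variable {a C : ℝ} (k : ℕ)

lemma antitone_mul_exp_neg_div (ha : 0 < a) (hC : 0 ≤ C) :
    Antitone fun x : ℝ => C * Real.exp (-x / a) := fun _ _ hxy =>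
  mul_le_mul_of_nonneg_left
    (Real.exp_le_exp.2 (div_le_div_of_nonneg_right (neg_le_neg hxy) ha.le)) hC

lemma mul_exp_neg_div_peak (ha : 0 < a) (hC : 0 < C) :
    C * Real.exp (-(a * Real.log (C / (k + 1))) / a) = k + 1 := by
  rw [neg_div, mul_div_cancel_left₀ _ ha.ne', Real.exp_neg, Real.exp_log (by positivity)]
  field_simp

lemma monotoneOn_geomProfile (ha : 0 < a) (hC : 0 < C) :
    MonotoneOn (geomProfile a C k) (Iic (a * Real.log (C / (k + 1)))) := by
  refine (antitoneOn_expPow_succ k).comp ((antitone_mul_exp_neg_div ha hC.le).antitoneOn _) ?_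
  intro x hx
  simpa [mul_exp_neg_div_peak k ha hC] using antitone_mul_exp_neg_div ha hC.le hx

lemma antitoneOn_geomProfile (ha : 0 < a) (hC : 0 < C) :
    AntitoneOn (geomProfile a C k) (Ici (a * Real.log (C / (k + 1)))) := by
  refine (monotoneOn_expPow_succ k).comp_AntitoneOn
    ((antitone_mul_exp_neg_div ha hC.le).antitoneOn _) ?_
  intro x hx
  exact ⟨by positivity, by simpa [mul_exp_neg_div_peak k ha hC] using
    antitone_mul_exp_neg_div ha hC.le (mem_Ici.1 hx)⟩

lemma geomProfile_peak (ha : 0 < a) (hC : 0 < C) :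
    geomProfile a C k (a * Real.log (C / (k + 1))) = expPow (k + 1) (k + 1) := by
  rw [geomProfile, mul_exp_neg_div_peak k ha hC]

lemma continuous_geomProfile : Continuous (geomProfile a C k) :=
  (continuous_expPow _).comp (by fun_prop)

lemma geomProfile_nonneg (hC : 0 ≤ C) (x : ℝ) : 0 ≤ geomProfile a C k x :=
  expPow_nonneg _ (by positivity)

lemma hasDerivAt_integral_expPow_left (u : ℝ) :
    HasDerivAt (fun u => ∫ t in u..C, expPow k t) (-expPow k u) u :=
  intervalIntegral.integral_hasDerivAt_left ((continuous_expPow k).intervalIntegrable _ _)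
    ((continuous_expPow k).stronglyMeasurableAtFilter _ _) (continuous_expPow k).continuousAt

/-- The substitution `t = C e^{-x/a}`. -/
lemma hasDerivAt_geomProfile_primitive (ha : a ≠ 0) (x : ℝ) :
    HasDerivAt (fun x => a * ∫ t in C * Real.exp (-x / a)..C, expPow k t)
      (geomProfile a C k x) x := by
  have hinner : HasDerivAt (fun x => C * Real.exp (-x / a))
      (C * Real.exp (-x / a) * (-1 / a)) x :=
    (((hasDerivAt_neg x).div_const a).exp).const_mul C |>.congr_deriv (by ring)
  refine (((hasDerivAt_integral_expPow_left k _).comp x hinner).const_mul a).congr_deriv ?_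
  simp only [geomProfile, expPow]
  field_simp
  ring

lemma tendsto_geomProfile_primitive (ha : 0 < a) :
    Tendsto (fun x => a * ∫ t in C * Real.exp (-x / a)..C, expPow k t) atTop
      (𝓝 (a * ∫ t in (0 : ℝ)..C, expPow k t)) := by
  have hexp : Tendsto (fun x : ℝ => C * Real.exp (-x / a)) atTop (𝓝 0) := by
    simpa using (Real.tendsto_exp_atBot.comp
      ((tendsto_neg_atTop_atBot).atBot_div_const ha)).const_mul C
  have hcont : Continuous fun u => ∫ t in u..C, expPow k t :=
    continuous_iff_continuousAt.2 fun u => (hasDerivAt_integral_expPow_left k u).continuousAt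
  exact ((hcont.tendsto 0).comp hexp).const_mul a

lemma integrableOn_geomProfile_Ioi (ha : 0 < a) (hC : 0 ≤ C) :
    IntegrableOn (geomProfile a C k) (Ioi 0) :=
  integrableOn_Ioi_deriv_of_nonneg' (fun x _ => hasDerivAt_geomProfile_primitive k ha.ne' x)
    (fun x _ => geomProfile_nonneg k hC x) (tendsto_geomProfile_primitive k ha)

lemma integral_geomProfile_Ioi (ha : 0 < a) (hC : 0 ≤ C) :
    ∫ x in Ioi 0, geomProfile a C k x = a * ∫ t in (0 : ℝ)..C, expPow k t := by
  rw [integral_Ioi_of_hasDerivAt_of_nonneg'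
    (fun x _ => hasDerivAt_geomProfile_primitive k ha.ne' x)
    (fun x _ => geomProfile_nonneg k hC x) (tendsto_geomProfile_primitive k ha)]
  simp

lemma summable_geomProfile (ha : 0 < a) (hC : 0 < C) :
    Summable fun ℓ : ℕ => geomProfile a C k (ℓ + 1) :=
  summable_of_unimodal (monotoneOn_geomProfile k ha hC) (antitoneOn_geomProfile k ha hC)
    (geomProfile_nonneg k hC.le) (continuous_geomProfile k)
    (integrableOn_geomProfile_Ioi k ha hC.le)

lemma abs_tsum_geomProfile_sub_le (ha : 0 < a) (hC : 0 < C) :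
    |∑' ℓ : ℕ, geomProfile a C k (ℓ + 1) - a * ∫ t in (0 : ℝ)..C, expPow k t|
      ≤ expPow (k + 1) (k + 1) := by
  rw [← integral_geomProfile_Ioi k ha hC.le, ← geomProfile_peak k ha hC]
  exact abs_tsum_sub_integral_le_of_unimodal (monotoneOn_geomProfile k ha hC)
    (antitoneOn_geomProfile k ha hC) (geomProfile_nonneg k hC.le) (continuous_geomProfile k)
    (integrableOn_geomProfile_Ioi k ha hC.le)

end GeomProfile

lemma s2_nonneg {p : ℕ → ℝ} (hp : ∀ ℓ, 0 ≤ p ℓ) (r n : ℕ) : 0 ≤ s2 p r n :=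
  tsum_nonneg fun ℓ => by have := hp ℓ; positivity

lemma geomPMF_nonneg {a : ℝ} (ha : 0 ≤ a) (ℓ : ℕ) : 0 ≤ geomPMF a ℓ := by
  unfold geomPMF
  split_ifs
  · exact le_rfl
  · exact mul_nonneg (by linarith [Real.one_le_exp (one_div_nonneg.2 ha)]) (Real.exp_pos _).le

lemma geomScale_pos {a : ℝ} (ha : 0 < a) {n : ℕ} (hn : 0 < n) : 0 < geomScale a n :=
  mul_pos (by exact_mod_cast hn)
    (by linarith [Real.add_one_lt_exp (one_div_pos.2 ha).ne', one_div_pos.2 ha])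

lemma tendsto_geomScale_atTop {a : ℕ → ℝ} (ha : ∀ n, 0 < a n)
    (hbdd : IsBoundedUnder (· ≤ ·) atTop a) :
    Tendsto (fun n => geomScale (a n) n) atTop atTop := by
  obtain ⟨B, hB⟩ := hbdd
  have hB : ∀ᶠ n in atTop, a n ≤ B := eventually_map.1 hB
  have hBpos : 0 < B := let ⟨n, hn⟩ := hB.exists; (ha n).trans_le hn
  refine tendsto_atTop_mono' atTop ?_ (tendsto_natCast_atTop_atTop.atTop_div_const hBpos)
  filter_upwards [hB] with n hn
  calc (n : ℝ) / B = n * (1 / B) := by ring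
    _ ≤ n * (1 / a n) := by gcongr; exact ha n
    _ ≤ geomScale (a n) n := by
        unfold geomScale
        gcongr
        linarith [Real.add_one_le_exp (1 / a n)]

lemma natCast_mul_geomPMF_succ (a : ℝ) (n ℓ : ℕ) :
    n * geomPMF a (ℓ + 1) = geomScale a n * Real.exp (-((ℓ : ℝ) + 1) / a) := by
  simp only [geomPMF, geomScale, if_neg ℓ.succ_ne_zero]
  push_cast
  ring

lemma s2_geomPMF_eq {a : ℝ} (ha : 0 < a) (r : ℕ) {n : ℕ} (hn : 0 < n) :
    s2 (geomPMF a) r n = ((r + 1) * ∑' ℓ : ℕ, geomProfile a (geomScale a n) r (ℓ + 1)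
      + ∑' ℓ : ℕ, geomProfile a (geomScale a n) (r + 1) (ℓ + 1)) / r ! := by
  have hC := geomScale_pos ha hn
  set G : ℕ → ℕ → ℝ := fun k ℓ => geomProfile a (geomScale a n) k (ℓ + 1)
  have hterm : (fun ℓ : ℕ =>
      ((r : ℝ) + 1 + n * geomPMF a (ℓ + 1)) * Real.exp (-(n * geomPMF a (ℓ + 1))) *
        (n * geomPMF a (ℓ + 1)) ^ (r + 1) / r !)
      = fun ℓ => ((r + 1) * G r ℓ + G (r + 1) ℓ) / r ! := by
    ext ℓ
    simp only [G, natCast_mul_geomPMF_succ, geomProfile, expPow]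
    ring
  have hG : ∀ k, Summable (G k) := fun k => summable_geomProfile k ha hC
  have hsum : Summable fun ℓ => ((r + 1) * G r ℓ + G (r + 1) ℓ) / r ! :=
    (((hG r).mul_left _).add (hG (r + 1))).div_const _
  rw [s2, tsum_eq_zero_add' (hterm ▸ hsum), hterm, tsum_div_const,
    Summable.tsum_add ((hG r).mul_left _) (hG (r + 1)), tsum_mul_left]
  simp [geomPMF, G]

def geomS2Approx (a : ℝ) (r n : ℕ) : ℝ :=
  ((r + 1) * (a * ∫ t in (0 : ℝ)..geomScale a n, expPow r t)
    + a * ∫ t in (0 : ℝ)..geomScale a n, expPow (r + 1) t) / r !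

lemma abs_s2_geomPMF_sub_approx_le {a : ℝ} (ha : 0 < a) (r : ℕ) {n : ℕ} (hn : 0 < n) :
    |s2 (geomPMF a) r n - geomS2Approx a r n|
      ≤ 2 * expPow (r + 1) (r + 1) + 2 * expPow (r + 2) (r + 2) := by
  have hC := geomScale_pos ha hn
  set S : ℕ → ℝ := fun k => ∑' ℓ : ℕ, geomProfile a (geomScale a n) k (ℓ + 1)
  set I : ℕ → ℝ := fun k => a * ∫ t in (0 : ℝ)..geomScale a n, expPow k t
  have hpeak : expPow (r + 1 + 1) ((r + 1 : ℕ) + 1) = expPow (r + 2) (r + 2) := by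
    push_cast
    ring_nf
  have hS : |S r - I r| ≤ expPow (r + 1) (r + 1) := abs_tsum_geomProfile_sub_le r ha hC
  have hS' : |S (r + 1) - I (r + 1)| ≤ expPow (r + 2) (r + 2) :=
    hpeak ▸ abs_tsum_geomProfile_sub_le (r + 1) ha hC
  rw [s2_geomPMF_eq ha r hn, geomS2Approx, ← sub_div, abs_div, Nat.abs_cast]
  calc |(r + 1) * S r + S (r + 1) - ((r + 1) * I r + I (r + 1))| / r !
      = |(r + 1) * (S r - I r) + (S (r + 1) - I (r + 1))| / r ! := by ring_nf
    _ ≤ ((r + 1) * expPow (r + 1) (r + 1) + expPow (r + 2) (r + 2)) / r ! := by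
        gcongr
        refine (abs_add_le _ _).trans ?_
        rw [abs_mul, abs_of_pos (by positivity : (0 : ℝ) < r + 1)]
        gcongr
    _ ≤ _ := add_div_factorial_le r (expPow_nonneg _ (by positivity))
        (expPow_nonneg _ (by positivity))

lemma tendsto_geomS2Approx {a : ℕ → ℝ} {A : ℝ} (haA : Tendsto a atTop (𝓝 A))
    (hC : Tendsto (fun n => geomScale (a n) n) atTop atTop) (r : ℕ) :
    Tendsto (fun n => geomS2Approx (a n) r n) atTop (𝓝 (2 * A * (r + 1))) := by
  have hlim : 2 * A * (r + 1) = ((r + 1) * (A * r !) + A * (r + 1)!) / r ! := by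
    rw [Nat.factorial_succ]
    push_cast
    field_simp
    ring
  rw [hlim]
  exact (((haA.mul ((tendsto_intervalIntegral_expPow r).comp hC)).const_mul ((r : ℝ) + 1)).add
    (haA.mul ((tendsto_intervalIntegral_expPow (r + 1)).comp hC))).div_const (r ! : ℝ)

theorem s2_bounds_dynamic_geometric_general (a : ℕ → ℝ) (ha : ∀ n, 0 < a n)
    (A : ℝ) (haA : Tendsto a atTop (𝓝 A)) (r : ℕ) :
    2 * max 0 (A * ((r : ℝ) + 1)
        - ((r : ℝ) + 1) ^ (r + 1) * Real.exp (-((r : ℝ) + 1))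
        - ((r : ℝ) + 2) ^ (r + 2) * Real.exp (-((r : ℝ) + 2)))
      ≤ liminf (fun n : ℕ => s2 (geomPMF (a n)) r n) atTop ∧
    liminf (fun n : ℕ => s2 (geomPMF (a n)) r n) atTop
      ≤ limsup (fun n : ℕ => s2 (geomPMF (a n)) r n) atTop ∧
    limsup (fun n : ℕ => s2 (geomPMF (a n)) r n) atTop
      ≤ 2 * A * ((r : ℝ) + 1)
        + 2 * ((r : ℝ) + 1) ^ (r + 1) * Real.exp (-((r : ℝ) + 1))
        + 2 * ((r : ℝ) + 2) ^ (r + 2) * Real.exp (-((r : ℝ) + 2)) := by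
  have hC := tendsto_geomScale_atTop ha haA.isBoundedUnder_le
  obtain ⟨hlow, hmid, hup⟩ := max_le_liminf_and_limsup_le_of_abs_sub_le
    (tendsto_geomS2Approx haA hC r)
    ((eventually_gt_atTop 0).mono fun n hn => abs_s2_geomPMF_sub_approx_le (ha n) r hn)
    (Eventually.of_forall fun n => s2_nonneg (geomPMF_nonneg (ha n).le) r n)
  simp only [expPow, mul_comm (Real.exp _)] at hlow hup
  refine ⟨le_trans ?_ hlow, hmid, by linarith⟩
  rw [mul_max_of_nonneg _ _ zero_le_two, mul_zero]
  exact max_le_max le_rfl (by linarith)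

/-- if `a_n > 0` and `a_n → a ∈ [0,∞)`, then for the dynamic geometric
distribution with parameter `a_n`, `liminf`/`limsup` of `s²_{r,n}` satisfy the stated bounds. -/
theorem s2_bounds_dynamic_geometric (a : ℕ → ℝ) (ha : ∀ n, 0 < a n)
    (A : ℝ) (hA : 0 ≤ A) (haA : Tendsto a atTop (𝓝 A)) (r : ℕ) :
    2 * max 0 (A * ((r : ℝ) + 1)
        - ((r : ℝ) + 1) ^ (r + 1) * Real.exp (-((r : ℝ) + 1))
        - ((r : ℝ) + 2) ^ (r + 2) * Real.exp (-((r : ℝ) + 2)))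
      ≤ liminf (fun n : ℕ => s2 (geomPMF (a n)) r n) atTop ∧
    liminf (fun n : ℕ => s2 (geomPMF (a n)) r n) atTop
      ≤ limsup (fun n : ℕ => s2 (geomPMF (a n)) r n) atTop ∧
    limsup (fun n : ℕ => s2 (geomPMF (a n)) r n) atTop
      ≤ 2 * A * ((r : ℝ) + 1)
        + 2 * ((r : ℝ) + 1) ^ (r + 1) * Real.exp (-((r : ℝ) + 1))
        + 2 * ((r : ℝ) + 2) ^ (r + 2) * Real.exp (-((r : ℝ) + 2)) :=
  s2_bounds_dynamic_geometric_general a ha A haA r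
end
end

section
/- Let a_n > 0 with a_n → ∞ and a_n/n → 0 as n → ∞, and fix an integer r ≥ 0. For the dynamic geometric distribution with parameter a_n, the quantity s²_{r,n} is asymptotically equivalent to 2 a_n (r+1) as n → ∞, i.e., s²_{r,n} / (2 a_n (r+1)) → 1. -/
open MeasureTheory ProbabilityTheory Filter Topology
open scoped NNReal

noncomputable section

/-! For `ℓ ≥ 1` we have `n p_ℓ = c e^{-ℓ/a}` with `c = n (e^{1/a} - 1)`, so `s²_{r,n}` is the sum
of `h(u) = (r + 1 + u) e^{-u} u^{r+1} / r!` over the logarithmic grid `u_ℓ = c e^{-ℓ/a}` of step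
`1/a`. Since `dt = a du / u` under `u = c e^{-t/a}`, this sum is a Riemann sum for
`a ∫_0^c h(u) du / u = a ∫_0^c g`, where `h(u) = u g(u)` and `∫_0^∞ g = 2 (r + 1)`; on each grid
cell the error is at most the variation of `h` there, so the total error is bounded by
`∫_0^∞ |h'|` independently of `n`. As `c_n ≥ n / a_n → ∞`, this gives
`s²_{r,n} = a_n (2 (r + 1) + o(1)) + O(1)`. -/

open intervalIntegral Set

lemma tendsto_div_of_abs_sub_mul_le {α : Type*} {l : Filter α} {u v A : α → ℝ} {L V : ℝ}
    (hA : Tendsto A l atTop) (hv : Tendsto v l (𝓝 L)) (hbound : ∀ᶠ n in l, |u n - A n * v n| ≤ V) :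
    Tendsto (fun n => u n / A n) l (𝓝 L) := by
  have herr : Tendsto (fun n => (u n - A n * v n) / A n) l (𝓝 0) := by
    refine squeeze_zero_norm' ?_ ((tendsto_const_nhds (x := V)).div_atTop hA)
    filter_upwards [hbound, hA.eventually_gt_atTop 0] with n hn hAn
    rw [norm_div, Real.norm_eq_abs, Real.norm_eq_abs, abs_of_pos hAn]
    gcongr
  have hsum := herr.add hv
  rw [zero_add] at hsum
  refine hsum.congr' ?_
  filter_upwards [hA.eventually_gt_atTop 0] with n hAn
  field_simp
  ring

section LogarithmicGrid

variable {h h' g : ℝ → ℝ}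

lemma abs_sub_le_integral_abs_deriv (hderiv : ∀ x, HasDerivAt h (h' x) x) (hh' : Continuous h')
    {y u z : ℝ} (hyu : y ≤ u) (huz : u ≤ z) :
    |h u - h y| ≤ ∫ t in y..z, |h' t| := by
  rw [← integral_eq_sub_of_hasDerivAt (fun t _ => hderiv t) (hh'.intervalIntegrable _ _)]
  calc |∫ t in y..u, h' t| ≤ ∫ t in y..u, |h' t| := abs_integral_le_integral_abs hyu
    _ ≤ ∫ t in y..z, |h' t| :=
      integral_mono_interval le_rfl hyu huz (Eventually.of_forall fun t => abs_nonneg _)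
        (hh'.abs.intervalIntegrable _ _)

lemma abs_sub_mul_integral_le (hderiv : ∀ x, HasDerivAt h (h' x) x) (hh' : Continuous h')
    (hhg : ∀ x, h x = x * g x) {a y : ℝ} (ha : 0 < a) (hy : 0 < y) :
    |h y - a * ∫ u in y..Real.exp a⁻¹ * y, g u| ≤ ∫ u in y..Real.exp a⁻¹ * y, |h' u| := by
  set z := Real.exp a⁻¹ * y
  have hyz : y ≤ z := le_mul_of_one_le_left hy.le (Real.one_le_exp (inv_pos.2 ha).le)
  have hpos : ∀ u ∈ uIcc y z, 0 < u := fun u hu => hy.trans_le (uIcc_of_le hyz ▸ hu).1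
  have hcont : ContinuousOn (fun u => (h u - h y) * u⁻¹) (uIcc y z) :=
    ((continuous_iff_continuousAt.2 fun x => (hderiv x).continuousAt).continuousOn.sub
      continuousOn_const).mul (continuousOn_inv₀.mono fun u hu => (hpos u hu).ne')
  have hinv_int : IntervalIntegrable (fun u => u⁻¹) volume y z :=
    intervalIntegrable_inv (fun u hu => (hpos u hu).ne') continuousOn_id
  have hinv : ∫ u in y..z, u⁻¹ = a⁻¹ := by
    rw [integral_inv_of_pos hy (hy.trans_le hyz), mul_div_cancel_right₀ _ hy.ne', Real.log_exp]
  have hsplit : (a * ∫ u in y..z, g u) - h y = a * ∫ u in y..z, (h u - h y) * u⁻¹ := by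
    have hgu : ∫ u in y..z, g u = ∫ u in y..z, ((h u - h y) * u⁻¹ + h y * u⁻¹) :=
      integral_congr fun u hu => by
        rw [hhg u]
        field_simp [(hpos u hu).ne']
        ring
    rw [hgu, integral_add hcont.intervalIntegrable (hinv_int.const_mul _),
      intervalIntegral.integral_const_mul, hinv]
    field_simp
    ring
  set V := ∫ u in y..z, |h' u|
  have hbound : |∫ u in y..z, (h u - h y) * u⁻¹| ≤ V * a⁻¹ := by
    rw [← hinv, ← intervalIntegral.integral_const_mul, ← Real.norm_eq_abs]
    refine norm_integral_le_of_norm_le hyz (Eventually.of_forall fun u hu => ?_)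
      (hinv_int.const_mul _)
    have hu0 : 0 < u := hy.trans hu.1
    rw [norm_mul, Real.norm_eq_abs, norm_inv, Real.norm_eq_abs, abs_of_pos hu0]
    exact mul_le_mul_of_nonneg_right (abs_sub_le_integral_abs_deriv hderiv hh' hu.1.le hu.2)
      (inv_nonneg.2 hu0.le)
  rw [abs_sub_comm, hsplit, abs_mul, abs_of_pos ha]
  calc a * |∫ u in y..z, (h u - h y) * u⁻¹| ≤ a * (V * a⁻¹) := by gcongr
    _ = V := by field_simp

lemma sum_integral_adjacent_intervals_rev {f : ℝ → ℝ} (hf : Continuous f) (x : ℕ → ℝ) (N : ℕ) :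
    ∑ i ∈ Finset.range N, ∫ u in x (i + 1)..x i, f u = ∫ u in x N..x 0, f u := by
  induction N with
  | zero => simp
  | succ N ih =>
    rw [Finset.sum_range_succ, ih, add_comm,
      integral_add_adjacent_intervals (hf.intervalIntegrable _ _) (hf.intervalIntegrable _ _)]

lemma abs_sum_sub_mul_integral_le (hderiv : ∀ x, HasDerivAt h (h' x) x) (hh' : Continuous h')
    (hg : Continuous g) (hhg : ∀ x, h x = x * g x) (hint : IntegrableOn h' (Ioi 0))
    {a c : ℝ} (ha : 0 < a) (hc : 0 < c) (N : ℕ) :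
    |∑ i ∈ Finset.range N, h (c * Real.exp (-((i + 1 : ℕ) : ℝ) / a)) -
        a * ∫ u in c * Real.exp (-(N : ℝ) / a)..c, g u| ≤ ∫ u in Ioi 0, |h' u| := by
  set x : ℕ → ℝ := fun i => c * Real.exp (-(i : ℝ) / a)
  have hx0 : x 0 = c := by simp [x]
  have hxN : 0 < x N := by positivity
  have hxNc : x N ≤ c :=
    mul_le_of_le_one_right hc.le (Real.exp_le_one_iff.2 (div_nonpos_of_nonpos_of_nonneg
      (neg_nonpos.2 N.cast_nonneg) ha.le))
  have hstep : ∀ i, Real.exp a⁻¹ * x (i + 1) = x i := fun i => by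
    simp only [x]
    rw [mul_left_comm, ← Real.exp_add]
    push_cast
    ring_nf
  calc |∑ i ∈ Finset.range N, h (x (i + 1)) - a * ∫ u in x N..c, g u|
      = |∑ i ∈ Finset.range N, (h (x (i + 1)) - a * ∫ u in x (i + 1)..x i, g u)| := by
        rw [Finset.sum_sub_distrib, ← Finset.mul_sum, sum_integral_adjacent_intervals_rev hg,
          hx0]
    _ ≤ ∑ i ∈ Finset.range N, |h (x (i + 1)) - a * ∫ u in x (i + 1)..x i, g u| :=
        Finset.abs_sum_le_sum_abs _ _
    _ ≤ ∑ i ∈ Finset.range N, ∫ u in x (i + 1)..x i, |h' u| :=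
        Finset.sum_le_sum fun i _ => hstep i ▸
          abs_sub_mul_integral_le hderiv hh' hhg ha (by positivity)
    _ = ∫ u in x N..c, |h' u| := by rw [sum_integral_adjacent_intervals_rev hh'.abs, hx0]
    _ ≤ ∫ u in Ioi 0, |h' u| := by
        rw [integral_of_le hxNc]
        exact setIntegral_mono_set hint.abs (ae_of_all _ fun _ => abs_nonneg _)
          (Ioc_subset_Ioi_self.trans (Ioi_subset_Ioi hxN.le)).eventuallyLE

lemma summable_comp_mul_exp_neg (hg : Continuous g) (hhg : ∀ x, h x = x * g x) {a c : ℝ}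
    (ha : 0 < a) (hc : 0 ≤ c) :
    Summable fun i : ℕ => h (c * Real.exp (-((i + 1 : ℕ) : ℝ) / a)) := by
  obtain ⟨M, hM⟩ := isCompact_Icc.exists_bound_of_continuousOn (hg.continuousOn (s := Icc 0 c))
  set q := Real.exp (-a⁻¹)
  have hq : q < 1 := Real.exp_lt_one_iff.2 (neg_lt_zero.2 (inv_pos.2 ha))
  have hpow : ∀ i : ℕ, Real.exp (-((i + 1 : ℕ) : ℝ) / a) = q ^ (i + 1) := fun i => by
    rw [← Real.exp_nat_mul]
    ring_nf
  refine ((summable_geometric_of_lt_one (Real.exp_pos _).le hq).mul_left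
    (M * c * q)).of_norm_bounded fun i => ?_
  have hmem : c * q ^ (i + 1) ∈ Icc 0 c :=
    ⟨by positivity, mul_le_of_le_one_right hc (pow_le_one₀ (Real.exp_pos _).le hq.le)⟩
  rw [hpow, hhg, norm_mul, Real.norm_eq_abs, abs_of_nonneg hmem.1]
  calc c * q ^ (i + 1) * ‖g (c * q ^ (i + 1))‖ ≤ c * q ^ (i + 1) * M := by
        gcongr; exact hM _ hmem
    _ = M * c * q * q ^ i := by ring

lemma abs_tsum_sub_mul_integral_le (hderiv : ∀ x, HasDerivAt h (h' x) x) (hh' : Continuous h')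
    (hg : Continuous g) (hhg : ∀ x, h x = x * g x) (hint : IntegrableOn h' (Ioi 0))
    {a c : ℝ} (ha : 0 < a) (hc : 0 < c) :
    |∑' i : ℕ, h (c * Real.exp (-((i + 1 : ℕ) : ℝ) / a)) - a * ∫ u in 0..c, g u| ≤
      ∫ u in Ioi 0, |h' u| := by
  have hsum := (summable_comp_mul_exp_neg hg hhg ha hc.le).hasSum.tendsto_sum_nat
  have hgrid : Tendsto (fun N : ℕ => c * Real.exp (-(N : ℝ) / a)) atTop (𝓝 0) := by
    simpa using (Real.tendsto_exp_atBot.comp ((tendsto_neg_atTop_atBot.comp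
      tendsto_natCast_atTop_atTop).atBot_div_const ha)).const_mul c
  have hprim : Continuous fun u => ∫ x in u..c, g x := by
    simp_rw [integral_symm c]
    exact (continuous_primitive (fun _ _ => hg.intervalIntegrable _ _) c).neg
  exact le_of_tendsto ((hsum.sub (((hprim.tendsto 0).comp hgrid).const_mul a)).abs)
    (Eventually.of_forall (abs_sum_sub_mul_integral_le hderiv hh' hg hhg hint ha hc))

end LogarithmicGrid

def powExpNeg (k : ℕ) (x : ℝ) : ℝ := x ^ k * Real.exp (-x)

@[fun_prop]
lemma continuous_powExpNeg (k : ℕ) : Continuous (powExpNeg k) := by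
  unfold powExpNeg
  fun_prop

lemma powExpNeg_eq_gammaIntegrand (k : ℕ) (x : ℝ) :
    powExpNeg k x = Real.exp (-x) * x ^ ((k + 1 : ℝ) - 1) := by
  rw [add_sub_cancel_right, Real.rpow_natCast, powExpNeg, mul_comm]

lemma integrableOn_powExpNeg (k : ℕ) : IntegrableOn (powExpNeg k) (Ioi 0) :=
  (Real.GammaIntegral_convergent (by positivity : (0 : ℝ) < k + 1)).congr_fun
    (fun x _ => (powExpNeg_eq_gammaIntegrand k x).symm) measurableSet_Ioi

lemma integral_powExpNeg (k : ℕ) : ∫ x in Ioi 0, powExpNeg k x = k.factorial := by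
  rw [← Real.Gamma_nat_eq_factorial, Real.Gamma_eq_integral (by positivity)]
  exact setIntegral_congr_fun measurableSet_Ioi fun x _ => powExpNeg_eq_gammaIntegrand k x

lemma hasDerivAt_powExpNeg_succ (k : ℕ) (x : ℝ) :
    HasDerivAt (powExpNeg (k + 1)) ((k + 1) * powExpNeg k x - powExpNeg (k + 1) x) x := by
  have hpow : HasDerivAt (fun x : ℝ => x ^ (k + 1)) ((k + 1) * x ^ k) x := by
    simpa using hasDerivAt_pow (k + 1) x
  exact (hpow.mul (hasDerivAt_neg x).exp).congr_deriv (by unfold powExpNeg; ring)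

def s2Term (r : ℕ) (u : ℝ) : ℝ :=
  ((r : ℝ) + 1 + u) * Real.exp (-u) * u ^ (r + 1) / (r.factorial : ℝ)

def s2Density (r : ℕ) (u : ℝ) : ℝ :=
  ((r + 1) * powExpNeg r u + powExpNeg (r + 1) u) / r.factorial

lemma s2Term_eq_mul_s2Density (r : ℕ) (u : ℝ) : s2Term r u = u * s2Density r u := by
  simp only [s2Term, s2Density, powExpNeg]
  ring

lemma continuous_s2Density (r : ℕ) : Continuous (s2Density r) := by
  unfold s2Density
  fun_prop

lemma integrableOn_s2Density (r : ℕ) : IntegrableOn (s2Density r) (Ioi 0) :=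
  (((integrableOn_powExpNeg r).const_mul _).add (integrableOn_powExpNeg (r + 1))).div_const _

lemma integral_s2Density (r : ℕ) : ∫ u in Ioi 0, s2Density r u = 2 * (r + 1) := by
  have hfac : (r.factorial : ℝ) ≠ 0 := by positivity
  simp only [s2Density]
  rw [MeasureTheory.integral_div, integral_add ((integrableOn_powExpNeg r).const_mul _)
    (integrableOn_powExpNeg (r + 1)), MeasureTheory.integral_const_mul, integral_powExpNeg,
    integral_powExpNeg, Nat.factorial_succ]
  field_simp
  push_cast
  ring

lemma exists_hasDerivAt_s2Term (r : ℕ) : ∃ h' : ℝ → ℝ,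
    (∀ u, HasDerivAt (s2Term r) (h' u) u) ∧ Continuous h' ∧ IntegrableOn h' (Ioi 0) := by
  have hterm : s2Term r = fun u => ((r + 1) * powExpNeg (r + 1) u + powExpNeg (r + 2) u) /
      r.factorial := by
    funext u
    simp only [s2Term, powExpNeg]
    ring
  refine ⟨fun u => ((r + 1) * ((r + 1) * powExpNeg r u - powExpNeg (r + 1) u) +
      ((r + 2) * powExpNeg (r + 1) u - powExpNeg (r + 2) u)) / r.factorial,
    fun u => ?_, ?_, ?_⟩
  · rw [hterm]
    refine (((hasDerivAt_powExpNeg_succ r u).const_mul ((r : ℝ) + 1)).add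
      (hasDerivAt_powExpNeg_succ (r + 1) u)).div_const (r.factorial : ℝ) |>.congr_deriv ?_
    push_cast
    ring
  · fun_prop
  · have hP := integrableOn_powExpNeg
    exact ((((hP r).const_mul _).sub (hP (r + 1))).const_mul _ |>.add
      (((hP (r + 1)).const_mul _).sub (hP (r + 2)))).div_const _

lemma s2_geomPMF_eq_tsum (a : ℝ) (r n : ℕ) :
    s2 (geomPMF a) r n = ∑' i : ℕ,
      s2Term r (n * (Real.exp (1 / a) - 1) * Real.exp (-((i + 1 : ℕ) : ℝ) / a)) := by
  have hsupp : Function.support (fun ℓ => s2Term r (n * geomPMF a ℓ)) ⊆ range Nat.succ :=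
    fun ℓ hℓ => Nat.exists_eq_succ_of_ne_zero (fun h0 => hℓ (by simp [h0, geomPMF, s2Term]))
      |>.imp fun _ => Eq.symm
  rw [show s2 (geomPMF a) r n = ∑' ℓ, s2Term r (n * geomPMF a ℓ) from rfl,
    ← Nat.succ_injective.tsum_eq hsupp]
  simp only [geomPMF, Nat.succ_ne_zero, if_false, mul_assoc, Nat.succ_eq_add_one]

lemma tendsto_natCast_mul_exp_one_div_sub_one_atTop {a : ℕ → ℝ} (ha : ∀ n, 0 < a n)
    (ha_n : Tendsto (fun n : ℕ => a n / n) atTop (𝓝 0)) :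
    Tendsto (fun n : ℕ => (n : ℝ) * (Real.exp (1 / a n) - 1)) atTop atTop := by
  have hpos : Tendsto (fun n : ℕ => a n / n) atTop (𝓝[>] 0) :=
    tendsto_nhdsWithin_of_tendsto_nhds_of_eventually_within _ ha_n
      ((eventually_gt_atTop 0).mono fun n hn => div_pos (ha n) (Nat.cast_pos.2 hn))
  refine tendsto_atTop_mono (fun n => ?_) hpos.inv_tendsto_nhdsGT_zero
  rw [Pi.inv_apply, inv_div, div_eq_mul_one_div]
  gcongr
  linarith [Real.add_one_le_exp (1 / a n)]

/-- if `a_n > 0`, `a_n → ∞` and `a_n/n → 0`, then for the dynamic geometric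
distribution with parameter `a_n` and any fixed `r ≥ 0`, `s²_{r,n} ∼ 2 a_n (r+1)`. -/
theorem s2_asymptotic_dynamic_geometric (a : ℕ → ℝ) (ha : ∀ n, 0 < a n)
    (ha_top : Tendsto a atTop atTop)
    (ha_n : Tendsto (fun n : ℕ => a n / (n : ℝ)) atTop (𝓝 0)) (r : ℕ) :
    Tendsto (fun n : ℕ => s2 (geomPMF (a n)) r n / (2 * a n * ((r : ℝ) + 1)))
      atTop (𝓝 1) := by
  set c : ℕ → ℝ := fun n => n * (Real.exp (1 / a n) - 1)
  have hc : Tendsto c atTop atTop := tendsto_natCast_mul_exp_one_div_sub_one_atTop ha ha_n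
  obtain ⟨h', hderiv, hh', hint⟩ := exists_hasDerivAt_s2Term r
  have hbound : ∀ᶠ n in atTop,
      |s2 (geomPMF (a n)) r n - a n * ∫ u in 0..c n, s2Density r u| ≤ ∫ u in Ioi 0, |h' u| := by
    filter_upwards [hc.eventually_gt_atTop 0] with n hcn
    rw [s2_geomPMF_eq_tsum]
    exact abs_tsum_sub_mul_integral_le hderiv hh' (continuous_s2Density r)
      (s2Term_eq_mul_s2Density r) hint (ha n) hcn
  have hdensity : Tendsto (fun n => ∫ u in 0..c n, s2Density r u) atTop (𝓝 (2 * (r + 1))) :=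
    integral_s2Density r ▸ intervalIntegral_tendsto_integral_Ioi 0 (integrableOn_s2Density r) hc
  have hlim := (tendsto_div_of_abs_sub_mul_le ha_top hdensity hbound).div_const (2 * (r + 1))
  rw [div_self (by positivity)] at hlim
  refine hlim.congr fun n => ?_
  rw [div_div]
  congr 1
  ring
end
end
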